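/- arXiv:1411.0547 — 6 statements merged into one kernel-verified Lean document; each statement's English description precedes it below -/
import Mathlib

section
/- Let R be a finite set of vertices, u a fixed vertex not in R, z a vertex with z ∉ R ∪ {u}, and ζ ∈ [0,1], α > 0. Suppose x satisfies the triangle inequality (x(w,z) ≥ x(u,z) − x(u,w) and 1 − x(w,z) ≥ 1 − x(u,z) − x(u,w) for all w), w⁺(v,z) + w⁻(v,z) ≥ 1 for all v ∈ R, ∑_{v∈R} x(u,v) ≤ α|R|/2, and x(u,v) ≤ ζ for all v ∈ R. Then ∑_{v∈R}[w⁺(v,z)·x(v,z) + w⁻(v,z)·(1−x(v,z))] ≥ ∑_{v∈R}[w⁺(v,z)·x(u,z) + w⁻(v,z)·(1−x(u,z)) − ζ(w⁺(v,z)+w⁻(v,z)) + (ζ − α/2)]. -/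
theorem stmt_1 {V : Type*} [Fintype V] [DecidableEq V]
    (x : V × V → ℝ) (wp wm : V × V → ℝ)
    (R : Finset V) (u z : V) (ζ α : ℝ)
    (hu : u ∉ R) (hz : z ∉ R) (hzu : z ≠ u)
    (hζ : 0 ≤ ζ ∧ ζ ≤ 1) (hα : 0 < α)
    (htri : ∀ w : V, x (w, z) ≥ x (u, z) - x (u, w) ∧
      1 - x (w, z) ≥ 1 - x (u, z) - x (u, w))
    (hw : ∀ v ∈ R, wp (v, z) + wm (v, z) ≥ 1)
    (hwp : ∀ v ∈ R, 0 ≤ wp (v, z)) (hwm : ∀ v ∈ R, 0 ≤ wm (v, z))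
    (hsum : ∑ v ∈ R, x (u, v) ≤ α * R.card / 2)
    (hxζ : ∀ v ∈ R, x (u, v) ≤ ζ) :
    ∑ v ∈ R, (wp (v, z) * x (v, z) + wm (v, z) * (1 - x (v, z))) ≥
      ∑ v ∈ R, (wp (v, z) * x (u, z) + wm (v, z) * (1 - x (u, z))
        - ζ * (wp (v, z) + wm (v, z)) + (ζ - α / 2)) := by
  rw [ge_iff_le]
  calc ∑ v ∈ R, (wp (v, z) * x (u, z) + wm (v, z) * (1 - x (u, z))
        - ζ * (wp (v, z) + wm (v, z)) + (ζ - α / 2))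
      = ∑ v ∈ R, (wp (v, z) * x (u, z) + wm (v, z) * (1 - x (u, z))
        - ζ * (wp (v, z) + wm (v, z)) + ζ) - α / 2 * R.card := by
        simp only [Finset.sum_add_distrib, Finset.sum_sub_distrib,
          Finset.sum_const, nsmul_eq_mul]
        ring
    _ ≤ ∑ v ∈ R, (wp (v, z) * x (u, z) + wm (v, z) * (1 - x (u, z))
        - ζ * (wp (v, z) + wm (v, z)) + ζ) - ∑ v ∈ R, x (u, v) := by
        have : ∑ v ∈ R, x (u, v) ≤ α / 2 * R.card := by
          calc ∑ v ∈ R, x (u, v) ≤ α * R.card / 2 := hsum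
            _ = α / 2 * R.card := by ring
        linarith
    _ = ∑ v ∈ R, (wp (v, z) * x (u, z) + wm (v, z) * (1 - x (u, z))
        - ζ * (wp (v, z) + wm (v, z)) + (ζ - x (u, v))) := by
        simp only [Finset.sum_add_distrib, Finset.sum_sub_distrib,
          Finset.sum_const, nsmul_eq_mul]
        ring
    _ ≤ ∑ v ∈ R, (wp (v, z) * x (u, z) + wm (v, z) * (1 - x (u, z))
        - (wp (v, z) + wm (v, z)) * x (u, v)) := by
        apply Finset.sum_le_sum
        intro v hv
        have h1 := hw v hv
        have h2 := hxζ v hv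
        nlinarith [mul_le_mul_of_nonneg_right h1 (sub_nonneg.2 h2)]
    _ ≤ ∑ v ∈ R, (wp (v, z) * x (v, z) + wm (v, z) * (1 - x (v, z))) := by
        apply Finset.sum_le_sum
        intro v hv
        have h1 := (htri v).1
        have h2 := (htri v).2
        have h3 := hwp v hv
        have h4 := hwm v hv
        nlinarith [mul_le_mul_of_nonneg_left h1 h3, mul_le_mul_of_nonneg_left h2 h4]
end

section
/- Let T be a finite set, α ∈ (0,1/2), and x : T → [0,α] with ∑_{v∈T} x(v) ≥ α|T|/2. Suppose each edge uv (v ∈ T) has weights with w⁺(v) ≤ 1 and w⁺(v) + w⁻(v) ≥ 1. Then the total cluster-cost ∑_{v∈T} w⁺(v) is at most (2/α) times the total LP-cost ∑_{v∈T}[w⁺(v)x(v) + w⁻(v)(1−x(v))]. -/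
theorem stmt_3 {V : Type*} [DecidableEq V] (T : Finset V) (α : ℝ)
    (x wp wm : V → ℝ)
    (hα : 0 < α) (hα2 : α < 1 / 2)
    (hx : ∀ v ∈ T, 0 ≤ x v ∧ x v ≤ α)
    (hxsum : ∑ v ∈ T, x v ≥ α * T.card / 2)
    (hwp : ∀ v ∈ T, 0 ≤ wp v ∧ wp v ≤ 1)
    (hwm : ∀ v ∈ T, 0 ≤ wm v)
    (hw : ∀ v ∈ T, wp v + wm v ≥ 1) :
    ∑ v ∈ T, wp v ≤ (2 / α) * ∑ v ∈ T, (wp v * x v + wm v * (1 - x v)) := by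
  have key : ∀ v ∈ T, α / 2 * wp v + (x v - α / 2) ≤ wp v * x v + wm v * (1 - x v) := by
    intro v hv
    obtain ⟨hx0, hxα⟩ := hx v hv
    obtain ⟨hwp0, hwp1⟩ := hwp v hv
    have hwm0 := hwm v hv
    have hw1 := hw v hv
    have h1x : 0 ≤ 1 - x v := by linarith
    nlinarith [mul_nonneg (sub_nonneg.2 hwp1) (by linarith : (0:ℝ) ≤ 1 - 2 * x v + α / 2),
      mul_le_mul_of_nonneg_right (by linarith : 1 - wp v ≤ wm v) h1x]
  have hsum := Finset.sum_le_sum key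
  rw [Finset.sum_add_distrib, ← Finset.mul_sum, Finset.sum_sub_distrib,
    Finset.sum_const, nsmul_eq_mul] at hsum
  have hmain : α / 2 * ∑ v ∈ T, wp v ≤ ∑ v ∈ T, (wp v * x v + wm v * (1 - x v)) := by
    have : (T.card : ℝ) * (α / 2) = α * T.card / 2 := by ring
    linarith [hxsum]
  rw [ge_iff_le, div_mul_eq_mul_div, le_div_iff₀ hα] at *
  calc (∑ v ∈ T, wp v) * α = 2 * (α / 2 * ∑ v ∈ T, wp v) := by ring
    _ ≤ 2 * ∑ v ∈ T, (wp v * x v + wm v * (1 - x v)) := by linarith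
end

section
/- Let α ∈ (0,1/2), τ ≥ 1, η = α − α/(2τ), and let w⁺(v) ∈ [0,1], w⁻(v) ∈ [0,τ] with w⁺(v) + w⁻(v) ≥ 1 for v in a finite set R. Define g(t) = ∑_{v∈R}[w⁺(v)·t + w⁻(v)(1−t) − α(w⁺(v)+w⁻(v)) + α/2]. Then g(α) ≥ α|R|/2 and g(1−η) ≥ (1−η−α)∑_{v∈R} w⁺(v). -/
/-!
Each summand of `g` is affine in `t`. At `t = α` a summand equals `w⁻ (1 - 2α) + α/2 ≥ α/2`.
At `t = 1 - η` it equals `(1 - η - α) w⁺ + α/2 - w⁻ α/(2τ)`, and `w⁻ ≤ τ` makes the last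
two terms nonnegative.
-/

/-- The summand of `g` at `t` for a vertex with weights `a = w⁺(v)` and `b = w⁻(v)`. -/
noncomputable def crossCost (α t a b : ℝ) : ℝ := a * t + b * (1 - t) - α * (a + b) + α / 2

theorem half_le_crossCost_self {α b : ℝ} (a : ℝ) (hα : α ≤ 1 / 2) (hb : 0 ≤ b) :
    α / 2 ≤ crossCost α α a b := by
  have hexpand : crossCost α α a b = b * (1 - 2 * α) + α / 2 := by
    unfold crossCost; ring
  rw [hexpand]
  nlinarith

theorem mul_div_two_mul_le_half {a b τ : ℝ} (ha : 0 ≤ a) (hb : 0 ≤ b) (hbτ : b ≤ τ) :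
    b * (a / (2 * τ)) ≤ a / 2 :=
  calc b * (a / (2 * τ)) = b / τ * (a / 2) := by ring
    _ ≤ 1 * (a / 2) := by gcongr; exact div_le_one_of_le₀ hbτ (hb.trans hbτ)
    _ = a / 2 := one_mul _

theorem mul_le_crossCost_one_sub {α τ a b : ℝ} (hα : 0 ≤ α) (hb : 0 ≤ b) (hbτ : b ≤ τ) :
    (1 - (α - α / (2 * τ)) - α) * a ≤ crossCost α (1 - (α - α / (2 * τ))) a b := by
  have hexpand : crossCost α (1 - (α - α / (2 * τ))) a b
      = (1 - (α - α / (2 * τ)) - α) * a + (α / 2 - b * (α / (2 * τ))) := by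
    unfold crossCost; ring
  rw [hexpand]
  linarith [mul_div_two_mul_le_half hα hb hbτ]

theorem stmt_6_general {V : Type*} (α τ η : ℝ) (R : Finset V) (wp wm : V → ℝ)
    (hα : 0 < α) (hα2 : α < 1 / 2)
    (hη : η = α - α / (2 * τ))
    (hwm : ∀ v ∈ R, 0 ≤ wm v ∧ wm v ≤ τ)
    (g : ℝ → ℝ)
    (hg : ∀ t, g t = ∑ v ∈ R, (wp v * t + wm v * (1 - t)
      - α * (wp v + wm v) + α / 2)) :
    g α ≥ α * R.card / 2 ∧ g (1 - η) ≥ (1 - η - α) * ∑ v ∈ R, wp v := by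
  refine ⟨?_, ?_⟩
  · calc α * R.card / 2 = ∑ _v ∈ R, α / 2 := by rw [Finset.sum_const, nsmul_eq_mul]; ring
      _ ≤ ∑ v ∈ R, crossCost α α (wp v) (wm v) :=
        Finset.sum_le_sum fun v hv => half_le_crossCost_self _ hα2.le (hwm v hv).1
      _ = g α := (hg α).symm
  · calc (1 - η - α) * ∑ v ∈ R, wp v = ∑ v ∈ R, (1 - η - α) * wp v := Finset.mul_sum _ _ _
      _ ≤ ∑ v ∈ R, crossCost α (1 - η) (wp v) (wm v) := Finset.sum_le_sum fun v hv => by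
          rw [hη]; exact mul_le_crossCost_one_sub hα.le (hwm v hv).1 (hwm v hv).2
      _ = g (1 - η) := (hg _).symm

theorem stmt_6 {V : Type*} (α τ η : ℝ) (R : Finset V) (wp wm : V → ℝ)
    (hα : 0 < α) (hα2 : α < 1 / 2) (hτ : 1 ≤ τ)
    (hη : η = α - α / (2 * τ))
    (hwp : ∀ v ∈ R, 0 ≤ wp v ∧ wp v ≤ 1)
    (hwm : ∀ v ∈ R, 0 ≤ wm v ∧ wm v ≤ τ)
    (hw : ∀ v ∈ R, wp v + wm v ≥ 1)
    (g : ℝ → ℝ)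
    (hg : ∀ t, g t = ∑ v ∈ R, (wp v * t + wm v * (1 - t)
      - α * (wp v + wm v) + α / 2)) :
    g α ≥ α * R.card / 2 ∧ g (1 - η) ≥ (1 - η - α) * ∑ v ∈ R, wp v :=
  stmt_6_general α τ η R wp wm hα hα2 hη hwm g hg
end

section
/- For every τ ≥ 1 and every μ ∈ (0,4], the equation 2αμ/(1−2α) + 1/(1−2α+α/(2τ)) = 2/α has a unique solution α in the open interval (0, 1/2). -/
theorem stmt_8 (τ μ : ℝ) (hτ : 1 ≤ τ) (hμ : 0 < μ) (hμ4 : μ ≤ 4) :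
    ∃! α : ℝ, α ∈ Set.Ioo (0 : ℝ) (1 / 2) ∧
      2 * α * μ / (1 - 2 * α) + 1 / (1 - 2 * α + α / (2 * τ)) = 2 / α := by
  have hτ0 : (0:ℝ) < τ := lt_of_lt_of_le one_pos hτ
  have h2τ : (0:ℝ) < 2 * τ := by linarith
  set g : ℝ → ℝ := fun α => 2 * α * μ / (1 - 2 * α) + 1 / (1 - 2 * α + α / (2 * τ)) - 2 / α
    with hg
  -- strict monotonicity on (0, 1/2)
  have hmono : ∀ x ∈ Set.Ioo (0:ℝ) (1/2), ∀ y ∈ Set.Ioo (0:ℝ) (1/2), x < y → g x < g y := by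
    rintro x ⟨hx0, hx2⟩ y ⟨hy0, hy2⟩ hxy
    have h1x : (0:ℝ) < 1 - 2 * x := by linarith
    have h1y : (0:ℝ) < 1 - 2 * y := by linarith
    have hDx : (0:ℝ) < 1 - 2 * x + x / (2 * τ) := by
      have : 0 < x / (2 * τ) := div_pos hx0 h2τ
      linarith
    have hDy : (0:ℝ) < 1 - 2 * y + y / (2 * τ) := by
      have : 0 < y / (2 * τ) := div_pos hy0 h2τ
      linarith
    have t1 : 2 * x * μ / (1 - 2 * x) < 2 * y * μ / (1 - 2 * y) := by
      rw [div_lt_div_iff₀ h1x h1y]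
      nlinarith
    have hDyx : 1 - 2 * y + y / (2 * τ) < 1 - 2 * x + x / (2 * τ) := by
      have h1 : (y - x) / (2 * τ) ≤ (y - x) / 2 := by
        apply div_le_div_of_nonneg_left (by linarith) (by norm_num) (by linarith)
      have h2 : y / (2 * τ) - x / (2 * τ) = (y - x) / (2 * τ) := by ring
      linarith
    have t2 : 1 / (1 - 2 * x + x / (2 * τ)) < 1 / (1 - 2 * y + y / (2 * τ)) :=
      one_div_lt_one_div_of_lt hDy hDyx
    have t3 : 2 / y < 2 / x := div_lt_div_of_pos_left (by norm_num) hx0 hxy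
    simp only [hg]
    linarith
  obtain ⟨b, hb⟩ : ∃ b : ℝ, b = 1/2 - μ/32 := ⟨_, rfl⟩
  have hb38 : (3/8 : ℝ) ≤ b := by rw [hb]; linarith
  have hb12 : b < 1/2 := by rw [hb]; linarith
  have h1b : 1 - 2 * b = μ / 16 := by rw [hb]; ring
  -- continuity on [1/4, b]
  have hcont : ContinuousOn g (Set.Icc (1/4 : ℝ) b) := by
    apply ContinuousOn.sub
    · apply ContinuousOn.add
      · apply ContinuousOn.div (by fun_prop) (by fun_prop)
        rintro x ⟨hx1, hx2⟩
        have : 1 - 2 * b ≤ 1 - 2 * x := by linarith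
        have : (0:ℝ) < 1 - 2 * x := by rw [h1b] at this; linarith
        linarith
      · apply ContinuousOn.div (by fun_prop) (by fun_prop)
        rintro x ⟨hx1, hx2⟩
        have h1 : 1 - 2 * b ≤ 1 - 2 * x := by linarith
        rw [h1b] at h1
        have h2 : 0 < x / (2 * τ) := div_pos (by linarith) h2τ
        intro h; nlinarith
    · apply ContinuousOn.div (by fun_prop) (by fun_prop)
      rintro x ⟨hx1, hx2⟩
      intro h; rw [h] at hx1; norm_num at hx1
  -- g (1/4) < 0
  have hga : g (1/4) < 0 := by
    simp only [hg]
    have e1 : 2 * (1/4 : ℝ) * μ / (1 - 2 * (1/4)) = μ := by norm_num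
    have e3 : 2 / (1/4 : ℝ) = 8 := by norm_num
    have hd : (0:ℝ) < 1 - 2 * (1/4 : ℝ) + (1/4) / (2 * τ) := by
      have : 0 < (1/4 : ℝ) / (2 * τ) := div_pos (by norm_num) h2τ
      linarith
    have h2 : 1 / (1 - 2 * (1/4 : ℝ) + (1/4) / (2 * τ)) ≤ 2 := by
      rw [div_le_iff₀ hd]
      have : 0 ≤ (1/4 : ℝ) / (2 * τ) := le_of_lt (div_pos (by norm_num) h2τ)
      linarith
    rw [e1, e3]
    linarith
  -- g b > 0
  have hgb : 0 < g b := by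
    simp only [hg]
    have hb0 : (0:ℝ) < b := by linarith
    have e1 : 2 * b * μ / (1 - 2 * b) = 32 * b := by
      rw [h1b]; field_simp; ring
    have hDb : (0:ℝ) < 1 - 2 * b + b / (2 * τ) := by
      have h1 : (0:ℝ) < 1 - 2 * b := by rw [h1b]; linarith
      have h2 : 0 < b / (2 * τ) := div_pos hb0 h2τ
      linarith
    have e2 : 0 < 1 / (1 - 2 * b + b / (2 * τ)) := by positivity
    have e3 : 2 / b < 6 := by
      rw [div_lt_iff₀ hb0]; linarith
    rw [e1]
    linarith
  -- intermediate value theorem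
  have hab : (1/4 : ℝ) ≤ b := by linarith
  have hsub := intermediate_value_Ioo hab hcont
  have h0mem : (0:ℝ) ∈ Set.Ioo (g (1/4)) (g b) := ⟨hga, hgb⟩
  obtain ⟨c, hcmem, hgc⟩ := hsub h0mem
  obtain ⟨hc1, hc2⟩ := hcmem
  have hcIoo : c ∈ Set.Ioo (0:ℝ) (1/2) := ⟨by linarith, by linarith⟩
  have hceq : 2 * c * μ / (1 - 2 * c) + 1 / (1 - 2 * c + c / (2 * τ)) = 2 / c := by
    have : g c = 0 := hgc
    simp only [hg] at this
    linarith
  refine ⟨c, ⟨hcIoo, hceq⟩, ?_⟩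
  rintro y ⟨hyIoo, hyeq⟩
  have hgy : g y = 0 := by simp only [hg]; linarith
  have hgc0 : g c = 0 := hgc
  rcases lt_trichotomy y c with h | h | h
  · have := hmono y hyIoo c hcIoo h
    rw [hgy, hgc0] at this; norm_num at this
  · exact h
  · have := hmono c hcIoo y hyIoo h
    rw [hgy, hgc0] at this; norm_num at this
end

section
/- Let G be a finite simple graph and K ≥ 0 an integer. If every vertex v independently retains min(d(v), K) of its incident edges and all non-retained edges (edges retained by neither endpoint) are deleted, then the number of deleted edges is at most ∑_{v} max(d(v)−K, 0). Moreover, any edge set X whose removal leaves all degrees at most K satisfies |X| ≥ (1/2)∑_{v} max(d(v)−K, 0). Hence the greedy deletion is a 2-approximation to the minimum such X. -/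
open Finset

theorem stmt_14 {V : Type*} [Fintype V] [DecidableEq V]
    (G : SimpleGraph V) [DecidableRel G.Adj] (K : ℕ)
    (retain : V → Finset (Sym2 V))
    (hsub : ∀ v, retain v ⊆ G.incidenceFinset v)
    (hcard : ∀ v, (retain v).card = min (G.degree v) K) :
    (G.edgeFinset.filter (fun e => ∀ v, e ∉ retain v)).card
      ≤ ∑ v, (G.degree v - K) ∧
    ∀ X : Finset (Sym2 V), X ⊆ G.edgeFinset →
      (∀ v, ((G.incidenceFinset v).filter (fun e => e ∉ X)).card ≤ K) →
      ∑ v, (G.degree v - K) ≤ 2 * X.card := by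
  constructor
  · -- part 1
    have hsubset : G.edgeFinset.filter (fun e => ∀ v, e ∉ retain v) ⊆
        Finset.univ.biUnion (fun v => G.incidenceFinset v \ retain v) := by
      intro e he
      simp only [mem_filter] at he
      obtain ⟨heE, hnot⟩ := he
      induction e with
      | h a b =>
        refine Finset.mem_biUnion.2 ⟨a, Finset.mem_univ a, ?_⟩
        rw [Finset.mem_sdiff]
        refine ⟨?_, hnot a⟩
        rw [SimpleGraph.mem_incidenceFinset]
        exact ⟨SimpleGraph.mem_edgeFinset.1 heE, Sym2.mem_mk_left a b⟩
    calc (G.edgeFinset.filter (fun e => ∀ v, e ∉ retain v)).card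
        ≤ (Finset.univ.biUnion (fun v => G.incidenceFinset v \ retain v)).card :=
          Finset.card_le_card hsubset
      _ ≤ ∑ v, (G.incidenceFinset v \ retain v).card := Finset.card_biUnion_le
      _ ≤ ∑ v, (G.degree v - K) := by
          refine Finset.sum_le_sum fun v _ => ?_
          rw [Finset.card_sdiff_of_subset (hsub v), hcard v,
            G.card_incidenceFinset_eq_degree v]
          omega
  · -- part 2
    intro X hXE hdeg
    have key : ∀ v, G.degree v - K ≤ ((G.incidenceFinset v).filter (· ∈ X)).card := by
      intro v
      have hsplit := Finset.card_filter_add_card_filter_not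
        (s := G.incidenceFinset v) (p := (· ∈ X))
      rw [G.card_incidenceFinset_eq_degree v] at hsplit
      have := hdeg v
      omega
    have hswap : ∑ v, ((G.incidenceFinset v).filter (· ∈ X)).card
        = ∑ e ∈ X, (Finset.univ.filter (fun v => e ∈ G.incidenceFinset v)).card := by
      have h1 : ∀ v, ((G.incidenceFinset v).filter (· ∈ X)).card
          = (X.filter (· ∈ G.incidenceFinset v)).card := by
        intro v
        rw [Finset.filter_mem_eq_inter, Finset.filter_mem_eq_inter, Finset.inter_comm]
      simp only [h1, Finset.card_filter]
      exact Finset.sum_comm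
    have htwo : ∀ e ∈ X, (Finset.univ.filter (fun v => e ∈ G.incidenceFinset v)).card = 2 := by
      intro e heX
      have heE : e ∈ G.edgeSet := SimpleGraph.mem_edgeFinset.1 (hXE heX)
      induction e with
      | h a b =>
        have hadj : G.Adj a b := heE
        have hne : a ≠ b := hadj.ne
        have : Finset.univ.filter (fun v => s(a,b) ∈ G.incidenceFinset v) = {a, b} := by
          ext v
          simp [SimpleGraph.mem_incidenceFinset, SimpleGraph.incidenceSet, heE,
            Sym2.mem_iff, eq_comm]
        rw [this, Finset.card_insert_of_notMem (by simp [hne]), Finset.card_singleton]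
    calc ∑ v, (G.degree v - K) ≤ ∑ v, ((G.incidenceFinset v).filter (· ∈ X)).card :=
          Finset.sum_le_sum fun v _ => key v
      _ = ∑ e ∈ X, (Finset.univ.filter (fun v => e ∈ G.incidenceFinset v)).card := hswap
      _ = ∑ _e ∈ X, 2 := Finset.sum_congr rfl htwo
      _ = 2 * X.card := by simp [Finset.sum_const, mul_comm]
end

section
/- In any partition of the vertex set of a graph into clusters each of size at most K+1, the set of edges lying inside clusters forms a subgraph of maximum degree at most K. Consequently, if X is a minimum set of positive edges whose removal makes every positive degree at most K, then for any clustering with cluster sizes ≤ K+1 the clustering cost (number of positive edges between clusters plus negative edges inside clusters) is at least |X|. -/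
theorem stmt_15 {V ι : Type*} [Fintype V] [DecidableEq V] [DecidableEq ι]
    (Gp : SimpleGraph V) [DecidableRel Gp.Adj] (K : ℕ)
    (c : V → ι)
    (hsize : ∀ i : ι, (Finset.univ.filter (fun v => c v = i)).card ≤ K + 1)
    (X : Finset (Sym2 V)) (hXsub : X ⊆ Gp.edgeFinset)
    (hXdeg : ∀ v, ((Gp.incidenceFinset v).filter (fun e => e ∉ X)).card ≤ K)
    (hXmin : ∀ Y : Finset (Sym2 V), Y ⊆ Gp.edgeFinset →
      (∀ v, ((Gp.incidenceFinset v).filter (fun e => e ∉ Y)).card ≤ K) →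
      X.card ≤ Y.card) :
    (∀ v, ((Gp.neighborFinset v).filter (fun w => c w = c v)).card ≤ K) ∧
    X.card ≤
      (Gp.edgeFinset.filter
        (fun e => Sym2.lift ⟨fun u v => decide (c u ≠ c v), fun u v => by
          simp [ne_comm]⟩ e = true)).card
      + (Gpᶜ.edgeFinset.filter
        (fun e => Sym2.lift ⟨fun u v => decide (c u = c v), fun u v => by
          simp [eq_comm]⟩ e = true)).card := by
  have hdeg : ∀ v, ((Gp.neighborFinset v).filter (fun w => c w = c v)).card ≤ K := by
    intro v
    have hsub : (Gp.neighborFinset v).filter (fun w => c w = c v) ⊆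
        (Finset.univ.filter (fun w => c w = c v)).erase v := by
      intro w hw
      simp only [Finset.mem_filter, SimpleGraph.mem_neighborFinset] at hw
      refine Finset.mem_erase.2 ⟨(Gp.ne_of_adj hw.1).symm, ?_⟩
      simp [hw.2]
    calc ((Gp.neighborFinset v).filter (fun w => c w = c v)).card
        ≤ ((Finset.univ.filter (fun w => c w = c v)).erase v).card :=
          Finset.card_le_card hsub
      _ ≤ (Finset.univ.filter (fun w => c w = c v)).card - 1 := by
          rw [Finset.card_erase_of_mem (by simp)]
      _ ≤ (K + 1) - 1 := Nat.sub_le_sub_right (hsize (c v)) 1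
      _ = K := rfl
  refine ⟨hdeg, ?_⟩
  set Y := Gp.edgeFinset.filter
      (fun e => Sym2.lift ⟨fun u v => decide (c u ≠ c v), fun u v => by
        simp [ne_comm]⟩ e = true) with hY
  have hYsub : Y ⊆ Gp.edgeFinset := Finset.filter_subset _ _
  have hYdeg : ∀ v, ((Gp.incidenceFinset v).filter (fun e => e ∉ Y)).card ≤ K := by
    intro v
    have hcard : ((Gp.neighborFinset v).filter (fun w => c w = c v)).card =
        ((Gp.incidenceFinset v).filter (fun e => e ∉ Y)).card := by
      apply Finset.card_bij (fun w _ => s(v, w))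
      · intro w hw
        simp only [Finset.mem_filter, SimpleGraph.mem_neighborFinset] at hw
        simp only [Finset.mem_filter, hY, SimpleGraph.mem_incidenceFinset]
        refine ⟨⟨hw.1, Sym2.mem_mk_left v w⟩, ?_⟩
        simp [hw.1, hw.2]
      · intro w1 h1 w2 h2 heq
        rw [Sym2.eq_iff] at heq
        rcases heq with ⟨_, h⟩ | ⟨ha, hb⟩
        · exact h
        · exact hb.trans ha
      · intro e he
        simp only [Finset.mem_filter, SimpleGraph.mem_incidenceFinset,
          SimpleGraph.incidenceSet] at he
        obtain ⟨⟨hee, hve⟩, heY⟩ := he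
        obtain ⟨w, rfl⟩ := Sym2.mem_iff_exists.mp hve
        have hadj : Gp.Adj v w := (SimpleGraph.mem_edgeSet Gp).mp hee
        refine ⟨w, ?_, rfl⟩
        simp only [Finset.mem_filter, SimpleGraph.mem_neighborFinset]
        refine ⟨hadj, ?_⟩
        by_contra hne
        apply heY
        simp only [hY, Finset.mem_filter]
        refine ⟨SimpleGraph.mem_edgeFinset.mpr hee, ?_⟩
        have : ¬ c v = c w := fun h => hne h.symm
        simp [Ne, this]
    rw [← hcard]
    exact hdeg v
  exact le_trans (hXmin Y hYsub hYdeg) (Nat.le_add_right _ _)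
end
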